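/- arXiv:1804.05464 — 2 statements merged into one kernel-verified Lean document; each statement's English description precedes it below -/
import Mathlib

section
/- Fix real numbers a, b, c, d with a > 0, d < 0, a + d > 0, and a·d > c·b. Consider the two-player game on ℝ × ℝ with costs f₁(x₁, x₂) = (a/2)x₁² + b·x₁x₂ and f₂(x₁, x₂) = (d/2)x₂² + c·x₁x₂, and let ω(x₁, x₂) = (a·x₁ + b·x₂, c·x₁ + d·x₂). Then: (i) (0,0) is the unique zero of ω; (ii) both complex eigenvalues of the Jacobian Dω = [[a, b],[c, d]] have strictly positive real part, so (0,0) is a locally asymptotically stable equilibrium of ẋ = −ω(x); (iii) (0,0) is not a local Nash equilibrium of (f₁, f₂): for every x₂ ≠ 0, f₂(0, x₂) = (d/2)x₂² < 0 = f₂(0,0), so player 2 can strictly decrease its cost by arbitrarily small unilateral deviations. -/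
/-!
The pseudo-gradient `ω` is linear with Jacobian `J = [[a, b], [c, d]]`, and `det J > 0` makes
the origin its only zero. An eigenvalue `λ` of `J` solves `λ² - tr J · λ + det J = 0`: if it is
not real its real part is `tr J / 2 > 0`, and if it is real, `λ (tr J - λ) = det J > 0` forces
`0 < λ`. Along `x₁ = 0`, player 2's cost `(d/2) x₂²` is strictly concave since `d < 0`, so the
origin is not a Nash equilibrium.
-/

open Matrix Polynomial

lemma hasDerivAt_div_two_mul_sq_add_mul (p q x : ℝ) :
    HasDerivAt (fun y => p / 2 * y ^ 2 + q * y) (p * x + q) x := by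
  have h := ((hasDerivAt_pow 2 x).const_mul (p / 2)).add ((hasDerivAt_id' x).const_mul q)
  exact h.congr_deriv (by ring)

lemma linear_system_eq_zero_iff {K : Type*} [Field K] {a b c d : K} (h : a * d - b * c ≠ 0)
    (x y : K) : (a * x + b * y = 0 ∧ c * x + d * y = 0) ↔ (x = 0 ∧ y = 0) := by
  constructor
  · rintro ⟨h₁, h₂⟩
    have hx : (a * d - b * c) * x = 0 := by linear_combination d * h₁ - b * h₂
    have hy : (a * d - b * c) * y = 0 := by linear_combination a * h₂ - c * h₁
    exact ⟨(mul_eq_zero.mp hx).resolve_left h, (mul_eq_zero.mp hy).resolve_left h⟩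
  · rintro ⟨rfl, rfl⟩
    simp

lemma Complex.re_pos_of_sq_sub_mul_add_eq_zero {t δ : ℝ} (ht : 0 < t) (hδ : 0 < δ) {z : ℂ}
    (hz : z ^ 2 - t * z + δ = 0) : 0 < z.re := by
  have hre : z.re ^ 2 - z.im ^ 2 - t * z.re + δ = 0 := by
    simpa [sq] using congrArg Complex.re hz
  have him : z.re * z.im + z.im * z.re - t * z.im = 0 := by
    simpa [sq] using congrArg Complex.im hz
  rcases mul_eq_zero.mp (by linear_combination him : z.im * (2 * z.re - t) = 0) with hreal | hhalf
  · rw [hreal] at hre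
    nlinarith
  · linarith

lemma Matrix.re_pos_of_mem_aroots_charpoly (M : Matrix (Fin 2) (Fin 2) ℝ) (htr : 0 < M.trace)
    (hdet : 0 < M.det) {z : ℂ} (hz : z ∈ M.charpoly.aroots ℂ) : 0 < z.re := by
  rw [mem_aroots, charpoly_fin_two] at hz
  refine Complex.re_pos_of_sq_sub_mul_add_eq_zero htr hdet ?_
  simpa using hz.2

theorem stmt_4_general (a b c d : ℝ) (hd : d < 0) (htr : 0 < a + d)
    (hdet : c * b < a * d)
    (f₁ f₂ : ℝ → ℝ → ℝ)
    (hf₁ : ∀ x₁ x₂, f₁ x₁ x₂ = a / 2 * x₁ ^ 2 + b * x₁ * x₂)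
    (hf₂ : ∀ x₁ x₂, f₂ x₁ x₂ = d / 2 * x₂ ^ 2 + c * x₁ * x₂) :
    -- ω is the vector of the players' own partial derivatives
    (∀ x₁ x₂ : ℝ, deriv (fun y => f₁ y x₂) x₁ = a * x₁ + b * x₂) ∧
    (∀ x₁ x₂ : ℝ, deriv (fun y => f₂ x₁ y) x₂ = c * x₁ + d * x₂) ∧
    -- (i) the origin is the unique zero of ω
    (∀ x₁ x₂ : ℝ, (a * x₁ + b * x₂ = 0 ∧ c * x₁ + d * x₂ = 0) ↔ (x₁ = 0 ∧ x₂ = 0)) ∧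
    -- (ii) every eigenvalue of the Jacobian has strictly positive real part
    (∀ lam ∈ (!![a, b; c, d]).charpoly.aroots ℂ, 0 < lam.re) ∧
    -- (iii) the origin is not a local Nash equilibrium: player 2 deviates profitably
    (∀ x₂ : ℝ, x₂ ≠ 0 → f₂ 0 x₂ < f₂ 0 0) := by
  have hδ : 0 < a * d - b * c := by linarith [mul_comm b c]
  refine ⟨fun x₁ x₂ => ?_, fun x₁ x₂ => ?_, linear_system_eq_zero_iff hδ.ne',
    fun z hz => re_pos_of_mem_aroots_charpoly _ (by rwa [trace_fin_two_of])
      (by rwa [det_fin_two_of]) hz, fun x₂ hx₂ => ?_⟩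
  · have hf : (fun y => f₁ y x₂) = fun y => a / 2 * y ^ 2 + b * x₂ * y :=
      funext fun y => by rw [hf₁]; ring
    rw [hf, (hasDerivAt_div_two_mul_sq_add_mul a (b * x₂) x₁).deriv]
  · have hf : (fun y => f₂ x₁ y) = fun y => d / 2 * y ^ 2 + c * x₁ * y := funext (hf₂ x₁)
    rw [hf, (hasDerivAt_div_two_mul_sq_add_mul d (c * x₁) x₂).deriv, add_comm]
  · have hsq : 0 < x₂ ^ 2 := by positivity
    rw [hf₂, hf₂]
    nlinarith

/-- For `a > 0`, `d < 0`, `a + d > 0`, `a·d > c·b`, the game with costs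
`f₁(x₁,x₂) = (a/2)x₁² + b·x₁x₂`, `f₂(x₁,x₂) = (d/2)x₂² + c·x₁x₂` and
`ω(x₁,x₂) = (a·x₁ + b·x₂, c·x₁ + d·x₂)` satisfies: (i) the origin is the unique zero of
`ω`; (ii) both eigenvalues of `Dω = [[a,b],[c,d]]` have strictly positive real part, so
the origin is locally asymptotically stable for `ẋ = -ω(x)`; (iii) the origin is not a
local Nash equilibrium: player 2 strictly decreases its cost by any nonzero unilateral
deviation. -/
theorem stmt_4 (a b c d : ℝ) (ha : 0 < a) (hd : d < 0) (htr : 0 < a + d)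
    (hdet : c * b < a * d)
    (f₁ f₂ : ℝ → ℝ → ℝ)
    (hf₁ : ∀ x₁ x₂, f₁ x₁ x₂ = a / 2 * x₁ ^ 2 + b * x₁ * x₂)
    (hf₂ : ∀ x₁ x₂, f₂ x₁ x₂ = d / 2 * x₂ ^ 2 + c * x₁ * x₂) :
    -- ω is the vector of the players' own partial derivatives
    (∀ x₁ x₂ : ℝ, deriv (fun y => f₁ y x₂) x₁ = a * x₁ + b * x₂) ∧
    (∀ x₁ x₂ : ℝ, deriv (fun y => f₂ x₁ y) x₂ = c * x₁ + d * x₂) ∧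
    -- (i) the origin is the unique zero of ω
    (∀ x₁ x₂ : ℝ, (a * x₁ + b * x₂ = 0 ∧ c * x₁ + d * x₂ = 0) ↔ (x₁ = 0 ∧ x₂ = 0)) ∧
    -- (ii) every eigenvalue of the Jacobian has strictly positive real part
    (∀ lam ∈ (!![a, b; c, d]).charpoly.aroots ℂ, 0 < lam.re) ∧
    -- (iii) the origin is not a local Nash equilibrium: player 2 deviates profitably
    (∀ x₂ : ℝ, x₂ ≠ 0 → f₂ 0 x₂ < f₂ 0 0) :=
  stmt_4_general a b c d hd htr hdet f₁ f₂ hf₁ hf₂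
end

section
/- Fix real numbers a, b, c with a > 0, c > 0, and a·c < b². Consider the two-player potential game (f, f) on ℝ × ℝ with f(x₁, x₂) = (a/2)x₁² + b·x₁x₂ + (c/2)x₂², and let ω(x₁, x₂) = (∂f/∂x₁, ∂f/∂x₂) = (a·x₁ + b·x₂, b·x₁ + c·x₂). Then: (i) (0,0) is a local Nash equilibrium of (f, f): f(x₁, 0) ≥ f(0,0) for all x₁ and f(0, x₂) ≥ f(0,0) for all x₂, and indeed ω(0,0) = 0 with ∂²f/∂x₁² = a > 0 and ∂²f/∂x₂² = c > 0 (a differential Nash equilibrium); (ii) the symmetric Jacobian Dω = [[a, b],[b, c]] has determinant a·c − b² < 0, hence one strictly negative and one strictly positive real eigenvalue, so (0,0) is a strict saddle point of ẋ = −ω(x). -/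
/-!
Each player's cost is a parabola in its own variable with positive leading coefficient
(`a/2`, resp. `c/2`), so the origin is a Nash equilibrium. The Jacobian of `ω` is the Hessian
`[[a, b], [b, c]]` of the potential, whose characteristic polynomial `X² - tX + d` has
`d = ac - b² < 0`: its two real roots have product `d`, hence opposite signs.
-/

open Matrix Polynomial

lemma deriv_quadratic (p q r : ℝ) :
    deriv (fun y : ℝ => p * y ^ 2 + q * y + r) = fun x => 2 * p * x + q := by
  funext x
  have h : HasDerivAt (fun y : ℝ => p * y ^ 2 + q * y + r) (p * (2 * x) + q) x := by
    simpa using (((hasDerivAt_pow 2 x).const_mul p).add ((hasDerivAt_id x).const_mul q)).add_const r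
  rw [h.deriv]
  ring

lemma deriv_deriv_quadratic (p q r : ℝ) :
    deriv (deriv (fun y : ℝ => p * y ^ 2 + q * y + r)) = fun _ => 2 * p := by
  funext x
  rw [deriv_quadratic]
  exact (((hasDerivAt_id x).const_mul (2 * p)).add_const q).deriv.trans (mul_one _)

lemma exists_factor_neg_pos_of_const_neg {t d : ℝ} (hd : d < 0) :
    ∃ lm lp : ℝ, lm < 0 ∧ 0 < lp ∧ X ^ 2 - C t * X + C d = (X - C lm) * (X - C lp) := by
  -- the roots are `(t ± s) / 2`, and `s > |t|` because `d < 0`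
  set s := Real.sqrt (t ^ 2 - 4 * d)
  have hs : s ^ 2 = t ^ 2 - 4 * d := Real.sq_sqrt (by nlinarith)
  have hts : |t| < s := abs_lt_of_sq_lt_sq (by linarith) (Real.sqrt_nonneg _)
  obtain ⟨hlt, hgt⟩ := abs_lt.mp hts
  refine ⟨(t - s) / 2, (t + s) / 2, by linarith, by linarith, ?_⟩
  have hsum : C t = C ((t - s) / 2) + C ((t + s) / 2) := by rw [← C_add]; ring_nf
  have hprod : C d = C ((t - s) / 2) * C ((t + s) / 2) := by
    rw [← C_mul]; congr 1; linear_combination (1 / 4 : ℝ) * hs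
  rw [hsum, hprod]
  ring

lemma Matrix.exists_aroots_charpoly_eq_neg_pos_of_det_neg {A : Matrix (Fin 2) (Fin 2) ℝ}
    (hA : A.det < 0) :
    ∃ lm lp : ℝ, lm < 0 ∧ 0 < lp ∧ A.charpoly.aroots ℂ = {(lm : ℂ), (lp : ℂ)} := by
  obtain ⟨lm, lp, hlm, hlp, hfac⟩ := exists_factor_neg_pos_of_const_neg (t := A.trace) hA
  refine ⟨lm, lp, hlm, hlp, ?_⟩
  rw [charpoly_fin_two, hfac, aroots_mul (mul_ne_zero (X_sub_C_ne_zero _) (X_sub_C_ne_zero _)),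
    aroots_X_sub_C, aroots_X_sub_C]
  rfl

/-- For `a > 0`, `c > 0`, `a·c < b²`, the two-player potential game
`(f, f)` with `f(x₁,x₂) = (a/2)x₁² + b·x₁x₂ + (c/2)x₂²` and
`ω(x₁,x₂) = (a·x₁ + b·x₂, b·x₁ + c·x₂)` satisfies: (i) the origin is a local Nash
equilibrium (each player's cost is minimized in its own variable), `ω(0,0) = 0`, and the
own-block second derivatives are `a > 0` and `c > 0` (a differential Nash equilibrium);
(ii) the symmetric Jacobian `Dω = [[a,b],[b,c]]` has determinant `a·c - b² < 0`, hence
one strictly negative and one strictly positive real eigenvalue: the origin is a strict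
saddle of `ẋ = -ω(x)`. -/
theorem stmt_9 (a b c : ℝ) (ha : 0 < a) (hc : 0 < c) (hb : a * c < b ^ 2)
    (f : ℝ → ℝ → ℝ)
    (hf : ∀ x₁ x₂, f x₁ x₂ = a / 2 * x₁ ^ 2 + b * x₁ * x₂ + c / 2 * x₂ ^ 2) :
    -- ω is the vector of own partial derivatives of the potential/cost f
    (∀ x₁ x₂ : ℝ, deriv (fun y => f y x₂) x₁ = a * x₁ + b * x₂) ∧
    (∀ x₁ x₂ : ℝ, deriv (fun y => f x₁ y) x₂ = b * x₁ + c * x₂) ∧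
    -- (i) the origin is a local Nash equilibrium and a differential Nash equilibrium
    (∀ x₁ : ℝ, f 0 0 ≤ f x₁ 0) ∧ (∀ x₂ : ℝ, f 0 0 ≤ f 0 x₂) ∧
    (a * 0 + b * 0 = 0 ∧ b * 0 + c * 0 = 0) ∧
    (∀ x₁ x₂ : ℝ, deriv (deriv (fun y => f y x₂)) x₁ = a) ∧
    (∀ x₁ x₂ : ℝ, deriv (deriv (fun y => f x₁ y)) x₂ = c) ∧
    -- (ii) the symmetric Jacobian has negative determinant and a pair of real
    -- eigenvalues of opposite signs
    (!![a, b; b, c]).det = a * c - b ^ 2 ∧ (!![a, b; b, c]).det < 0 ∧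
    (∃ lm lp : ℝ, lm < 0 ∧ 0 < lp ∧
      (!![a, b; b, c]).charpoly.aroots ℂ = {(lm : ℂ), (lp : ℂ)}) := by
  have hf₁ (x₂ : ℝ) :
      (fun y => f y x₂) = fun y => a / 2 * y ^ 2 + b * x₂ * y + c / 2 * x₂ ^ 2 := by
    funext y; rw [hf]; ring
  have hf₂ (x₁ : ℝ) :
      (fun y => f x₁ y) = fun y => c / 2 * y ^ 2 + b * x₁ * y + a / 2 * x₁ ^ 2 := by
    funext y; rw [hf]; ring
  have hdet : (!![a, b; b, c]).det = a * c - b ^ 2 := by rw [det_fin_two_of, sq]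
  have hdet_neg : (!![a, b; b, c]).det < 0 := by rw [hdet]; linarith
  refine ⟨fun x₁ x₂ => ?_, fun x₁ x₂ => ?_, fun x₁ => ?_, fun x₂ => ?_, by simp,
    fun x₁ x₂ => ?_, fun x₁ x₂ => ?_, hdet, hdet_neg,
    exists_aroots_charpoly_eq_neg_pos_of_det_neg hdet_neg⟩
  · rw [hf₁, deriv_quadratic]; ring
  · rw [hf₂, deriv_quadratic]; ring
  · simp only [hf, mul_zero, add_zero, ne_eq, OfNat.ofNat_ne_zero,
      not_false_eq_true, zero_pow]
    positivity
  · simp only [hf, mul_zero, zero_mul, add_zero, zero_add, ne_eq, OfNat.ofNat_ne_zero,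
      not_false_eq_true, zero_pow]
    positivity
  · rw [hf₁, deriv_deriv_quadratic]; ring
  · rw [hf₂, deriv_deriv_quadratic]; ring
end
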